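/- arXiv:2404.07010 — 4 statements merged into one kernel-verified Lean document; each statement's English description precedes it below -/
import Mathlib

section
/- Let Q ⊂ ℝ^d be a polytope (the convex hull of a finite set) contained in the nonnegative orthant and not containing the origin, let f : ℝ^d → ℝ satisfy f(0) = 0 and be continuous and convex on conv(Q ∪ {0}), and let μ : ℝ^d → ℝ be continuous, concave on Q, with μ(x) ≥ f(x) for all x ∈ Q. Then the (d+2)-dimensional Lebesgue measure of the set S⁰ := {(x,y,z) ∈ ℝ^d × ℝ × ℝ : 0 < z ≤ 1, x ∈ z•Q, f(x) ≤ y ≤ z·μ(x/z)} equals (1/(d+2))·∫_Q μ(x) dx − ∫_0^1 z^d · (∫_Q f(z·x) dx) dz. -/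
/-!
Over the truncated cone `{(x, z) | 0 < z ≤ 1, x ∈ z • Q}` the fibre of `S⁰` in the `y`-direction
is the interval `[f x, z μ(x / z)]`, which is nonempty because convexity and `f 0 = 0` give
`f (z • u) ≤ z f u ≤ z μ u`. Integrating the fibre lengths slice by slice in `z` and substituting
`x = z • u` (Jacobian `z ^ d`) gives `∫₀¹ z ^ d ∫_Q (z μ u - f (z • u)) du dz`, and
`∫₀¹ z ^ (d + 1) dz = 1 / (d + 2)`. Replacing `f` and `μ` by continuous extensions (Tietze) from
`conv (Q ∪ {0})` and `Q` changes neither side, and makes all the integrands measurable.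
-/

open MeasureTheory Pointwise Set Module

theorem ContinuousOn.exists_continuous_eqOn {X : Type*} [TopologicalSpace X] [NormalSpace X]
    {s : Set X} (hs : IsClosed s) {f : X → ℝ} (hf : ContinuousOn f s) :
    ∃ g : X → ℝ, Continuous g ∧ EqOn g f s := by
  obtain ⟨g, hg⟩ := ContinuousMap.exists_restrict_eq hs ⟨s.domRestrict f, hf.domRestrict⟩
  exact ⟨g, g.continuous, fun x hx => congr($hg ⟨x, hx⟩)⟩

theorem ConvexOn.map_smul_le_mul {E : Type*} [AddCommGroup E] [Module ℝ E] {s : Set E}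
    {f : E → ℝ} (hf : ConvexOn ℝ s f) (h0 : (0 : E) ∈ s) (hf0 : f 0 = 0) {x : E} (hx : x ∈ s)
    {t : ℝ} (ht : t ∈ Icc 0 1) : f (t • x) ≤ t * f x := by
  simpa [hf0] using hf.2 hx h0 ht.1 (sub_nonneg.2 ht.2) (add_sub_cancel t 1)

theorem measure_prod_setOf_mem_Icc_eq_lintegral {α : Type*} [MeasurableSpace α] (μ : Measure α)
    {s : Set (α × ℝ)} (hs : MeasurableSet s) {lo hi : α × ℝ → ℝ}
    (hlo : Measurable lo) (hhi : Measurable hi) :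
    μ.prod volume {p : α × ℝ × ℝ | (p.1, p.2.2) ∈ s ∧
        p.2.1 ∈ Icc (lo (p.1, p.2.2)) (hi (p.1, p.2.2))} =
      ∫⁻ q in s, ENNReal.ofReal (hi q - lo q) ∂μ.prod volume := by
  have hbase : Measurable fun p : α × ℝ × ℝ => (p.1, p.2.2) :=
    measurable_fst.prodMk measurable_snd.snd
  have hS : MeasurableSet {p : α × ℝ × ℝ | (p.1, p.2.2) ∈ s ∧
      p.2.1 ∈ Icc (lo (p.1, p.2.2)) (hi (p.1, p.2.2))} :=
    (hbase hs).inter ((measurableSet_le (hlo.comp hbase) measurable_snd.fst).inter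
      (measurableSet_le measurable_snd.fst (hhi.comp hbase)))
  have hgap : Measurable fun q => ENNReal.ofReal (hi q - lo q) := (hhi.sub hlo).ennreal_ofReal
  rw [Measure.prod_apply hS, ← lintegral_indicator hs,
    lintegral_prod _ (hgap.indicator hs).aemeasurable]
  refine lintegral_congr fun x => ?_
  rw [Measure.volume_eq_prod, Measure.prod_apply_symm (measurable_prodMk_left hS)]
  refine lintegral_congr fun z => ?_
  by_cases h : (x, z) ∈ s
  · rw [indicator_of_mem h, ← Real.volume_Icc]
    congr 1
    ext y
    simp [h]
  · simp [h]

section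

variable {E : Type*} [NormedAddCommGroup E] [NormedSpace ℝ E]

def truncatedCone (Q : Set E) : Set (E × ℝ) := {q | q.2 ∈ Ioc 0 1 ∧ q.1 ∈ q.2 • Q}

def perspectiveRegion (Q : Set E) (f g : E → ℝ) : Set (E × ℝ × ℝ) :=
  {p | 0 < p.2.2 ∧ p.2.2 ≤ 1 ∧ p.1 ∈ p.2.2 • Q ∧
    f p.1 ≤ p.2.1 ∧ p.2.1 ≤ p.2.2 * g (p.2.2⁻¹ • p.1)}

theorem perspectiveRegion_congr {Q : Set E} {f f' g g' : E → ℝ}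
    (hf : ∀ z ∈ Ioc (0 : ℝ) 1, ∀ u ∈ Q, f (z • u) = f' (z • u)) (hg : EqOn g g' Q) :
    perspectiveRegion Q f g = perspectiveRegion Q f' g' := by
  ext ⟨x, y, z⟩
  simp only [perspectiveRegion, mem_ofPred_eq]
  refine and_congr_right fun hz => and_congr_right fun hz1 => and_congr_right fun hx => ?_
  have hu := (mem_smul_set_iff_inv_smul_mem₀ hz.ne' _ _).1 hx
  have hfx := hf z ⟨hz, hz1⟩ _ hu
  rw [smul_inv_smul₀ hz.ne'] at hfx
  rw [hfx, hg hu]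

variable [MeasurableSpace E] [BorelSpace E]

theorem measurableSet_truncatedCone {Q : Set E} (hQ : MeasurableSet Q) :
    MeasurableSet (truncatedCone Q) := by
  have h : truncatedCone Q = {q : E × ℝ | q.2 ∈ Ioc 0 1 ∧ q.2⁻¹ • q.1 ∈ Q} := by
    ext ⟨x, z⟩
    simp only [truncatedCone, mem_ofPred_eq]
    exact and_congr_right fun hz => mem_smul_set_iff_inv_smul_mem₀ hz.1.ne' _ _
  rw [h]
  exact (measurable_snd measurableSet_Ioc).inter ((measurable_snd.inv.smul measurable_fst) hQ)

theorem toReal_lintegral_Ioc_pow_mul_setIntegral_sub (μ : Measure E) [IsLocallyFiniteMeasure μ]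
    {Q : Set E} (hQ : IsCompact Q) {f g : E → ℝ} (hf : Continuous f) (hg : Continuous g)
    (hfg : ∀ z ∈ Ioc (0 : ℝ) 1, ∀ u ∈ Q, f (z • u) ≤ z * g u) (n : ℕ) :
    (∫⁻ z in Ioc 0 1, ENNReal.ofReal (z ^ n * ∫ u in Q, (z * g u - f (z • u)) ∂μ)).toReal =
      1 / ((n : ℝ) + 2) * ∫ x in Q, g x ∂μ -
        ∫ z in (0 : ℝ)..1, z ^ n * ∫ x in Q, f (z • x) ∂μ := by
  have hQm : MeasurableSet Q := hQ.measurableSet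
  have hgap_cont : Continuous fun z : ℝ => ∫ u in Q, (z * g u - f (z • u)) ∂μ :=
    continuous_parametric_integral_of_continuous (by fun_prop) hQ
  have hgap_nonneg : ∀ z ∈ Ioc (0 : ℝ) 1, 0 ≤ z ^ n * ∫ u in Q, (z * g u - f (z • u)) ∂μ :=
    fun z hz => mul_nonneg (pow_nonneg hz.1.le n)
      (setIntegral_nonneg hQm fun u hu => sub_nonneg.2 (hfg z hz u hu))
  have hJ_cont : Continuous fun z : ℝ => ∫ x in Q, f (z • x) ∂μ :=
    continuous_parametric_integral_of_continuous (by fun_prop) hQ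
  have hsplit : ∀ z : ℝ, ∫ u in Q, (z * g u - f (z • u)) ∂μ =
      z * ∫ x in Q, g x ∂μ - ∫ x in Q, f (z • x) ∂μ := fun z => by
    rw [integral_sub ((hg.continuousOn.integrableOn_compact hQ).const_mul z)
      ((by fun_prop : Continuous fun u => f (z • u)).continuousOn.integrableOn_compact hQ),
      integral_const_mul]
  rw [← integral_eq_lintegral_of_nonneg_ae
      ((ae_restrict_iff' measurableSet_Ioc).2 (ae_of_all _ hgap_nonneg))
      ((continuous_pow n).mul hgap_cont).aestronglyMeasurable,
    ← intervalIntegral.integral_of_le zero_le_one]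
  simp only [hsplit, mul_sub, ← mul_assoc, ← pow_succ]
  rw [intervalIntegral.integral_sub, intervalIntegral.integral_mul_const, integral_pow]
  · simp only [one_pow, ne_eq, add_eq_zero, one_ne_zero, and_false, not_false_eq_true,
      zero_pow, sub_zero, Nat.cast_add, Nat.cast_one]
    ring
  · exact ((continuous_pow _).mul continuous_const).intervalIntegrable _ _
  · exact ((continuous_pow _).mul hJ_cont).intervalIntegrable _ _

variable [FiniteDimensional ℝ E] (μ : Measure E) [μ.IsAddHaarMeasure]

theorem lintegral_comp_smul (f : E → ENNReal) {r : ℝ} (hr : r ≠ 0) :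
    ∫⁻ x, f (r • x) ∂μ = ENNReal.ofReal |(r ^ finrank ℝ E)⁻¹| * ∫⁻ x, f x ∂μ := by
  rw [← smul_eq_mul, ← lintegral_smul_measure, ← Measure.map_addHaar_smul μ hr,
    (measurableEmbedding_const_smul₀ hr).lintegral_map]

theorem setLIntegral_smul_set (f : E → ENNReal) {r : ℝ} (hr : 0 < r) {s : Set E}
    (hs : MeasurableSet s) :
    ∫⁻ x in r • s, f x ∂μ = ENNReal.ofReal (r ^ finrank ℝ E) * ∫⁻ u in s, f (r • u) ∂μ := by
  have hind : (fun u ↦ (r • s).indicator f (r • u)) = s.indicator (fun u ↦ f (r • u)) := by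
    ext u
    by_cases hu : u ∈ s <;> simp [indicator, smul_mem_smul_set_iff₀ hr.ne', hu]
  have hpos : 0 < r ^ finrank ℝ E := by positivity
  rw [← lintegral_indicator (hs.const_smul₀ r), ← lintegral_indicator hs, ← hind,
    lintegral_comp_smul μ _ hr.ne', ← mul_assoc, ← ENNReal.ofReal_mul hpos.le,
    abs_of_pos (inv_pos.2 hpos), mul_inv_cancel₀ hpos.ne', ENNReal.ofReal_one, one_mul]

theorem setLIntegral_truncatedCone {Q : Set E} (hQ : MeasurableSet Q) {f : E × ℝ → ENNReal}
    (hf : Measurable f) :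
    ∫⁻ q in truncatedCone Q, f q ∂μ.prod volume =
      ∫⁻ z in Ioc 0 1, ENNReal.ofReal (z ^ finrank ℝ E) * ∫⁻ u in Q, f (z • u, z) ∂μ := by
  classical
  have hC := measurableSet_truncatedCone hQ
  rw [← lintegral_indicator hC, lintegral_prod_symm' _ (hf.indicator hC),
    ← lintegral_indicator measurableSet_Ioc]
  refine lintegral_congr fun z => ?_
  by_cases hz : z ∈ Ioc 0 1
  · rw [indicator_of_mem hz, ← setLIntegral_smul_set μ (fun x => f (x, z)) hz.1 hQ,
      ← lintegral_indicator (hQ.const_smul₀ z)]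
    congr with x
    simp [indicator, truncatedCone, hz.1, hz.2]
  · have hzero : ∀ x, (truncatedCone Q).indicator f (x, z) = 0 :=
      fun x => indicator_of_notMem (fun h => hz h.1) _
    simp only [indicator_of_notMem hz, hzero, lintegral_zero]

theorem measure_perspectiveRegion {Q : Set E} (hQ : IsCompact Q) {f g : E → ℝ}
    (hf : Continuous f) (hg : Continuous g)
    (hfg : ∀ z ∈ Ioc (0 : ℝ) 1, ∀ u ∈ Q, f (z • u) ≤ z * g u) :
    μ.prod volume (perspectiveRegion Q f g) =
      ∫⁻ z in Ioc 0 1, ENNReal.ofReal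
        (z ^ finrank ℝ E * ∫ u in Q, (z * g u - f (z • u)) ∂μ) := by
  have hQm : MeasurableSet Q := hQ.measurableSet
  have hlo : Measurable fun q : E × ℝ => f q.1 := hf.measurable.comp measurable_fst
  have hhi : Measurable fun q : E × ℝ => q.2 * g (q.2⁻¹ • q.1) :=
    measurable_snd.mul (hg.measurable.comp (measurable_snd.inv.smul measurable_fst))
  have hgap : Measurable fun q : E × ℝ => ENNReal.ofReal (q.2 * g (q.2⁻¹ • q.1) - f q.1) :=
    (hhi.sub hlo).ennreal_ofReal
  have hregion : perspectiveRegion Q f g = {p | (p.1, p.2.2) ∈ truncatedCone Q ∧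
      p.2.1 ∈ Icc (f p.1) (p.2.2 * g (p.2.2⁻¹ • p.1))} := by
    ext p
    simp only [perspectiveRegion, truncatedCone, mem_ofPred_eq, mem_Ioc, mem_Icc]
    tauto
  refine (congrArg (μ.prod volume) hregion).trans <|
    (measure_prod_setOf_mem_Icc_eq_lintegral μ (measurableSet_truncatedCone hQm) hlo hhi).trans <|
    (setLIntegral_truncatedCone μ hQm hgap).trans <|
    setLIntegral_congr_fun measurableSet_Ioc fun z hz => ?_
  have hint : IntegrableOn (fun u => z * g u - f (z • u)) Q μ :=
    (by fun_prop : Continuous fun u => z * g u - f (z • u)).continuousOn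
      |>.integrableOn_compact hQ
  have hnonneg : 0 ≤ᵐ[μ.restrict Q] fun u => z * g u - f (z • u) :=
    (ae_restrict_iff' hQm).2 (ae_of_all _ fun u hu => sub_nonneg.2 (hfg z hz u hu))
  rw [ENNReal.ofReal_mul (by positivity [hz.1]),
    ofReal_integral_eq_lintegral_ofReal hint hnonneg]
  refine congrArg _ (setLIntegral_congr_fun hQm fun u _ => ?_)
  simp only [inv_smul_smul₀ hz.1.ne']

end

theorem stmt_1_general (d : ℕ) (V : Finset (Fin d → ℝ)) (Q : Set (Fin d → ℝ))
    (hQ : Q = convexHull ℝ (V : Set (Fin d → ℝ)))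
    (f μ : (Fin d → ℝ) → ℝ) (hf0 : f 0 = 0)
    (hfc : ContinuousOn f (convexHull ℝ (Q ∪ {0})))
    (hfv : ConvexOn ℝ (convexHull ℝ (Q ∪ {0})) f)
    (hμc : ContinuousOn μ Q)
    (hμf : ∀ x ∈ Q, f x ≤ μ x) :
    (volume {p : (Fin d → ℝ) × ℝ × ℝ |
        0 < p.2.2 ∧ p.2.2 ≤ 1 ∧ p.1 ∈ p.2.2 • Q ∧
        f p.1 ≤ p.2.1 ∧ p.2.1 ≤ p.2.2 * μ (p.2.2⁻¹ • p.1)}).toReal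
      = (1 / ((d : ℝ) + 2)) * (∫ x in Q, μ x)
        - ∫ z in (0:ℝ)..1, z ^ d * ∫ x in Q, f (z • x) := by
  have hQc : IsCompact Q := hQ ▸ V.finite_toSet.isCompact_convexHull (𝕜 := ℝ)
  have hKc : IsCompact (convexHull ℝ (Q ∪ {0})) := by
    rw [hQ, convexHull_convexHull_union_left]
    exact (V.finite_toSet.union (finite_singleton 0)).isCompact_convexHull (𝕜 := ℝ)
  set K := convexHull ℝ (Q ∪ {0})
  have h0K : (0 : Fin d → ℝ) ∈ K := subset_convexHull ℝ _ (Or.inr rfl)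
  have hQK : Q ⊆ K := subset_union_left.trans (subset_convexHull ℝ _)
  have hsmul : ∀ z ∈ Icc (0 : ℝ) 1, ∀ u ∈ Q, z • u ∈ K := fun z hz u hu =>
    (convex_convexHull ℝ _).smul_mem_of_zero_mem h0K (hQK hu) hz
  obtain ⟨F, hF, hFf⟩ := hfc.exists_continuous_eqOn hKc.isClosed
  obtain ⟨G, hG, hGμ⟩ := hμc.exists_continuous_eqOn hQc.isClosed
  have hfF : ∀ z ∈ Ioc (0 : ℝ) 1, ∀ u ∈ Q, f (z • u) = F (z • u) := fun z hz u hu =>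
    (hFf (hsmul z (Ioc_subset_Icc_self hz) u hu)).symm
  have hFG : ∀ z ∈ Ioc (0 : ℝ) 1, ∀ u ∈ Q, F (z • u) ≤ z * G u := fun z hz u hu => by
    rw [← hfF z hz u hu, hGμ hu]
    exact (hfv.map_smul_le_mul h0K hf0 (hQK hu) (Ioc_subset_Icc_self hz)).trans
      (mul_le_mul_of_nonneg_left (hμf u hu) hz.1.le)
  change (volume (perspectiveRegion Q f μ)).toReal = _
  rw [perspectiveRegion_congr hfF hGμ.symm, Measure.volume_eq_prod,
    measure_perspectiveRegion volume hQc hF hG hFG, Module.finrank_fin_fun, toReal_lintegral_Ioc_pow_mul_setIntegral_sub volume hQc hF hG hFG d,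
    setIntegral_congr_fun hQc.measurableSet hGμ]
  congr 1
  refine intervalIntegral.integral_congr fun z hz => ?_
  rw [uIcc_of_le zero_le_one] at hz
  exact congrArg _ (setIntegral_congr_fun hQc.measurableSet fun u hu => hFf (hsmul z hz u hu))

/-- Volume of the naïve relaxation of the disjunction between the origin
and a polytope `Q`, for a convex function `f` and a concave upper bound `μ`. -/
theorem stmt_1 (d : ℕ) (V : Finset (Fin d → ℝ)) (Q : Set (Fin d → ℝ))
    (hQ : Q = convexHull ℝ (V : Set (Fin d → ℝ)))
    (hQnonneg : ∀ x ∈ Q, ∀ i, 0 ≤ x i)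
    (hQ0 : (0 : Fin d → ℝ) ∉ Q)
    (f μ : (Fin d → ℝ) → ℝ) (hf0 : f 0 = 0)
    (hfc : ContinuousOn f (convexHull ℝ (Q ∪ {0})))
    (hfv : ConvexOn ℝ (convexHull ℝ (Q ∪ {0})) f)
    (hμc : ContinuousOn μ Q) (hμv : ConcaveOn ℝ Q μ)
    (hμf : ∀ x ∈ Q, f x ≤ μ x) :
    (volume {p : (Fin d → ℝ) × ℝ × ℝ |
        0 < p.2.2 ∧ p.2.2 ≤ 1 ∧ p.1 ∈ p.2.2 • Q ∧
        f p.1 ≤ p.2.1 ∧ p.2.1 ≤ p.2.2 * μ (p.2.2⁻¹ • p.1)}).toReal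
      = (1 / ((d : ℝ) + 2)) * (∫ x in Q, μ x)
        - ∫ z in (0:ℝ)..1, z ^ d * ∫ x in Q, f (z • x) :=
  stmt_1_general d V Q hQ f μ hf0 hfc hfv hμc hμf
end

section
/- Let Q ⊂ ℝ^d be a polytope (the convex hull of a finite set) contained in the nonnegative orthant and not containing the origin, let f : ℝ^d → ℝ satisfy f(0) = 0 and be continuous and convex on conv(Q ∪ {0}), and let μ : ℝ^d → ℝ be continuous, concave on Q, with μ(x) ≥ f(x) for all x ∈ Q. Then the difference of Lebesgue measures vol(S⁰) − vol(S), where S⁰ := {(x,y,z) : 0 < z ≤ 1, x ∈ z•Q, f(x) ≤ y ≤ z·μ(x/z)} and S := {(x,y,z) : 0 < z ≤ 1, x ∈ z•Q, z·f(x/z) ≤ y ≤ z·μ(x/z)}, equals (1/(d+2))·∫_Q f(x) dx − ∫_0^1 z^d · (∫_Q f(z·x) dx) dz; in particular this difference does not depend on the concave upper bound μ. -/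
/-!
Over each point `(x, z)` of the truncated cone `C = {(x, z) | 0 < z ≤ 1, x ∈ z • Q}` both sets
are vertical segments with the same top `z μ(x/z)`; their bottoms are `f x` and `z f(x/z)`, and
convexity with `f 0 = 0` gives `f x = f (z • (x/z)) ≤ z f(x/z)`. So the difference of the volumes
is `∫_C (z f(x/z) - f x)`, in which `μ` no longer appears. Slicing `C` at height `z` and
substituting `x = z • w` turns the two terms into `∫₀¹ z^(d+1) dz · ∫_Q f` and
`∫₀¹ z^d ∫_Q f(z • w) dw dz`.
-/

open MeasureTheory Pointwise Set Module

section RegionBetween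

variable {α : Type*} [MeasurableSpace α] {μ : Measure α} [SFinite μ] {s : Set α}

theorem volume_region_between_cc_eq_integral {f g : α → ℝ} (hf : IntegrableOn f s μ)
    (hg : IntegrableOn g s μ) (hs : MeasurableSet s) (hfg : ∀ x ∈ s, f x ≤ g x) :
    μ.prod volume {p : α × ℝ | p.1 ∈ s ∧ p.2 ∈ Icc (f p.1) (g p.1)} =
      ENNReal.ofReal (∫ x in s, g x - f x ∂μ) := by
  set R := {p : α × ℝ | p.1 ∈ s ∧ p.2 ∈ Icc (f p.1) (g p.1)}
  -- `f` and `g` are only a.e.-measurable for `μ.restrict s`, so we work with that measure.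
  have hR : NullMeasurableSet R ((μ.restrict s).prod volume) :=
    nullMeasurableSet_region_between_cc _ hf.aemeasurable hg.aemeasurable
      hs.nullMeasurableSet
  have hfiber : ∀ x ∈ s, ∫⁻ y, R.indicator 1 (x, y) = ENNReal.ofReal (g x - f x) := by
    intro x hx
    have hRx : Prod.mk x ⁻¹' R = Icc (f x) (g x) := by ext y; simp [R, hx]
    change ∫⁻ y, (Prod.mk x ⁻¹' R).indicator 1 y = _
    rw [hRx, lintegral_indicator_one measurableSet_Icc, Real.volume_Icc]
  calc μ.prod volume R = (μ.restrict s).prod volume R := by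
        rw [Measure.restrict_prod_eq_prod_univ,
          Measure.restrict_eq_self _ fun p (hp : p ∈ R) => mk_mem_prod hp.1 (mem_univ p.2)]
    _ = ∫⁻ x in s, (∫⁻ y, R.indicator 1 (x, y)) ∂μ := by
        rw [← lintegral_indicator_one₀ hR]
        exact lintegral_prod _ ((aemeasurable_indicator_const_iff 1).2 hR)
    _ = ∫⁻ x in s, ENNReal.ofReal (g x - f x) ∂μ := setLIntegral_congr_fun hs hfiber
    _ = ENNReal.ofReal (∫ x in s, g x - f x ∂μ) :=
        (ofReal_integral_eq_lintegral_ofReal (hg.sub hf)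
          ((ae_restrict_iff' hs).2 (Filter.Eventually.of_forall fun x hx =>
            sub_nonneg.2 (hfg x hx)))).symm

theorem toReal_volume_region_between_cc_sub {f₀ f₁ g : α → ℝ} (hf₀ : IntegrableOn f₀ s μ)
    (hf₁ : IntegrableOn f₁ s μ) (hg : IntegrableOn g s μ) (hs : MeasurableSet s)
    (hf₀₁ : ∀ x ∈ s, f₀ x ≤ f₁ x) (hf₁g : ∀ x ∈ s, f₁ x ≤ g x) :
    (μ.prod volume {p : α × ℝ | p.1 ∈ s ∧ p.2 ∈ Icc (f₀ p.1) (g p.1)}).toReal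
      - (μ.prod volume {p : α × ℝ | p.1 ∈ s ∧ p.2 ∈ Icc (f₁ p.1) (g p.1)}).toReal
      = (∫ x in s, f₁ x ∂μ) - ∫ x in s, f₀ x ∂μ := by
  have hf₀g : ∀ x ∈ s, f₀ x ≤ g x := fun x hx => (hf₀₁ x hx).trans (hf₁g x hx)
  rw [volume_region_between_cc_eq_integral hf₀ hg hs hf₀g,
    volume_region_between_cc_eq_integral hf₁ hg hs hf₁g,
    ENNReal.toReal_ofReal (setIntegral_nonneg hs fun x hx => sub_nonneg.2 (hf₀g x hx)),
    ENNReal.toReal_ofReal (setIntegral_nonneg hs fun x hx => sub_nonneg.2 (hf₁g x hx)),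
    integral_sub hg hf₀, integral_sub hg hf₁]
  ring

end RegionBetween

theorem measure_preimage_prodAssoc_swap {α β γ : Type*} [MeasurableSpace α]
    [MeasurableSpace β] [MeasurableSpace γ] (μ : Measure α) (ν : Measure β) (ρ : Measure γ)
    [SFinite μ] [SFinite ν] [SFinite ρ] (R : Set ((α × γ) × β)) :
    μ.prod (ν.prod ρ) ((fun p : α × β × γ => ((p.1, p.2.2), p.2.1)) ⁻¹' R) =
      (μ.prod ρ).prod ν R := by
  let e : α × β × γ ≃ᵐ (α × γ) × β :=
    (MeasurableEquiv.prodCongr (.refl α) .prodComm).trans MeasurableEquiv.prodAssoc.symm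
  have he : MeasurePreserving e (μ.prod (ν.prod ρ)) ((μ.prod ρ).prod ν) :=
    (measurePreserving_prodAssoc μ ρ ν).symm.comp
      ((MeasurePreserving.id μ).prod Measure.measurePreserving_swap)
  exact he.measure_preimage_equiv R

theorem setIntegral_prod_eq_setIntegral_setIntegral {α β E : Type*} [MeasurableSpace α]
    [MeasurableSpace β] [NormedAddCommGroup E] [NormedSpace ℝ E] {μ : Measure α} {ν : Measure β}
    [SFinite μ] [SFinite ν] {s : Set β} {t : β → Set α} {φ : α × β → E}
    (hs : MeasurableSet s) (hst : MeasurableSet {p : α × β | p.2 ∈ s ∧ p.1 ∈ t p.2})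
    (hφ : IntegrableOn φ {p : α × β | p.2 ∈ s ∧ p.1 ∈ t p.2} (μ.prod ν)) :
    ∫ p in {p : α × β | p.2 ∈ s ∧ p.1 ∈ t p.2}, φ p ∂μ.prod ν =
      ∫ y in s, ∫ x in t y, φ (x, y) ∂μ ∂ν := by
  rw [← integral_indicator hst, integral_prod_symm _ (hφ.integrable_indicator hst),
    ← integral_indicator hs]
  congr 1 with y
  by_cases hy : y ∈ s
  · have ht : MeasurableSet (t y) := by
      simpa [hy] using measurable_prodMk_right (y := y) hst
    rw [indicator_of_mem hy, ← integral_indicator ht]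
    congr 1 with x
    by_cases hx : x ∈ t y
    · rw [indicator_of_mem (show (x, y) ∈ {p : α × β | p.2 ∈ s ∧ p.1 ∈ t p.2} from ⟨hy, hx⟩),
        indicator_of_mem hx]
    · rw [indicator_of_notMem (fun h => hx h.2), indicator_of_notMem hx]
  · rw [indicator_of_notMem hy]
    exact integral_eq_zero_of_ae (.of_forall fun x => indicator_of_notMem (fun h => hy h.1) _)

section Perspective

variable {E : Type*} [NormedAddCommGroup E] [NormedSpace ℝ E]

def perspCone (Q : Set E) : Set (E × ℝ) := {q | q.2 ∈ Ioc 0 1 ∧ q.1 ∈ q.2 • Q}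

noncomputable def persp (f : E → ℝ) (q : E × ℝ) : ℝ := q.2 * f (q.2⁻¹ • q.1)

variable {Q : Set E}

theorem mem_perspCone_iff {q : E × ℝ} :
    q ∈ perspCone Q ↔ q.2 ∈ Ioc 0 1 ∧ q.2⁻¹ • q.1 ∈ Q :=
  and_congr_right fun hz => mem_smul_set_iff_inv_smul_mem₀ hz.1.ne' _ _

theorem fst_mem_Icc_smul_of_mem_perspCone {q : E × ℝ} (hq : q ∈ perspCone Q) :
    q.1 ∈ Icc (0 : ℝ) 1 • Q := by
  obtain ⟨hz, w, hw, hx⟩ := hq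
  exact hx ▸ smul_mem_smul (Ioc_subset_Icc_self hz) hw

theorem perspCone_subset_image :
    perspCone Q ⊆ (fun p : E × ℝ => (p.2 • p.1, p.2)) '' (Q ×ˢ Icc 0 1) := by
  rintro ⟨x, z⟩ ⟨hz, w, hw, hx⟩
  exact ⟨(w, z), ⟨hw, Ioc_subset_Icc_self hz⟩, by simpa using hx⟩

theorem continuousOn_persp {f : E → ℝ} (hf : ContinuousOn f Q) :
    ContinuousOn (persp f) (perspCone Q) :=
  continuousOn_snd.mul (hf.comp ((continuousOn_snd.inv₀ fun _ hq => hq.1.1.ne').smul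
    continuousOn_fst) fun _ hq => (mem_perspCone_iff.1 hq).2)

theorem abs_persp_le {f : E → ℝ} {C : ℝ} (hC : ∀ x ∈ Q, |f x| ≤ C) :
    ∀ q ∈ perspCone Q, |persp f q| ≤ C := by
  intro q hq
  obtain ⟨⟨hz0, hz1⟩, hw⟩ := mem_perspCone_iff.1 hq
  rw [persp, abs_mul, abs_of_pos hz0]
  exact (mul_le_of_le_one_left (abs_nonneg _) hz1).trans (hC _ hw)

theorem ConvexOn.apply_smul_le {K : Set E} {f : E → ℝ} (hf : ConvexOn ℝ K f) (h0 : (0 : E) ∈ K)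
    (hf0 : f 0 = 0) {w : E} (hw : w ∈ K) {t : ℝ} (ht0 : 0 ≤ t) (ht1 : t ≤ 1) :
    f (t • w) ≤ t * f w := by
  simpa [hf0] using hf.2 hw h0 ht0 (sub_nonneg.2 ht1) (add_sub_cancel t 1)

theorem ConvexOn.le_persp {K : Set E} {f : E → ℝ} (hf : ConvexOn ℝ K f) (hQK : Q ⊆ K)
    (h0 : (0 : E) ∈ K) (hf0 : f 0 = 0) : ∀ q ∈ perspCone Q, f q.1 ≤ persp f q := by
  intro q hq
  obtain ⟨⟨hz0, hz1⟩, hw⟩ := mem_perspCone_iff.1 hq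
  calc f q.1 = f (q.2 • q.2⁻¹ • q.1) := by rw [smul_inv_smul₀ hz0.ne']
    _ ≤ persp f q := hf.apply_smul_le h0 hf0 (hQK hw) hz0.le hz1

theorem persp_le_persp {f g : E → ℝ} (hfg : ∀ x ∈ Q, f x ≤ g x) :
    ∀ q ∈ perspCone Q, persp f q ≤ persp g q :=
  fun _ hq => mul_le_mul_of_nonneg_left (hfg _ (mem_perspCone_iff.1 hq).2) hq.1.1.le

theorem volume_setOf_perspCone [MeasureSpace E] [SFinite (volume : Measure E)]
    (l u : E × ℝ → ℝ) :
    volume {p : E × ℝ × ℝ | 0 < p.2.2 ∧ p.2.2 ≤ 1 ∧ p.1 ∈ p.2.2 • Q ∧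
        l (p.1, p.2.2) ≤ p.2.1 ∧ p.2.1 ≤ u (p.1, p.2.2)} =
      (volume : Measure (E × ℝ)).prod volume
        {r | r.1 ∈ perspCone Q ∧ r.2 ∈ Icc (l r.1) (u r.1)} := by
  refine Eq.trans ?_ (measure_preimage_prodAssoc_swap volume volume volume _)
  congr 1 with p
  simp [perspCone, and_assoc]

end Perspective

section Measure

variable {E : Type*} [NormedAddCommGroup E] [NormedSpace ℝ E] [FiniteDimensional ℝ E]
  {Q : Set E}

theorem measurableSet_perspCone [MeasurableSpace E] [BorelSpace E] (hQ : MeasurableSet Q) :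
    MeasurableSet (perspCone Q) := by
  have : perspCone Q = Prod.snd ⁻¹' Ioc 0 1 ∩ (fun q : E × ℝ => q.2⁻¹ • q.1) ⁻¹' Q := by
    ext q; exact mem_perspCone_iff
  rw [this]
  exact (measurable_snd measurableSet_Ioc).inter
    ((measurable_snd.inv.smul measurable_fst) hQ)

variable [MeasureSpace E] [BorelSpace E] [(volume : Measure E).IsAddHaarMeasure]

theorem integrableOn_perspCone_of_bound (hQ : IsCompact Q) {g : E × ℝ → ℝ}
    (hg : ContinuousOn g (perspCone Q)) {C : ℝ} (hC : ∀ q ∈ perspCone Q, |g q| ≤ C) :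
    IntegrableOn g (perspCone Q) := by
  have hm := measurableSet_perspCone hQ.isClosed.measurableSet
  have hfin : volume (perspCone Q) < ⊤ :=
    (measure_mono perspCone_subset_image).trans_lt <| IsCompact.measure_lt_top <|
      (hQ.prod isCompact_Icc).image <| (continuous_snd.smul continuous_fst).prodMk continuous_snd
  exact .of_bound hfin (hg.aestronglyMeasurable hm) C ((ae_restrict_iff' hm).2 (.of_forall hC))

theorem integrableOn_persp (hQ : IsCompact Q) {f : E → ℝ} (hf : ContinuousOn f Q) :
    IntegrableOn (persp f) (perspCone Q) := by
  obtain ⟨C, hC⟩ := hQ.exists_bound_of_continuousOn hf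
  exact integrableOn_perspCone_of_bound hQ (continuousOn_persp hf) (abs_persp_le hC)

theorem integrableOn_comp_fst_perspCone (hQ : IsCompact Q) {f : E → ℝ}
    (hf : ContinuousOn f (Icc (0 : ℝ) 1 • Q)) :
    IntegrableOn (fun q => f q.1) (perspCone Q) := by
  obtain ⟨C, hC⟩ := (isCompact_Icc.smul_set hQ).exists_bound_of_continuousOn hf
  exact integrableOn_perspCone_of_bound hQ
    (hf.comp continuousOn_fst fun _ => fst_mem_Icc_smul_of_mem_perspCone)
    fun q hq => hC _ (fst_mem_Icc_smul_of_mem_perspCone hq)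

theorem setIntegral_smul_set (g : E → ℝ) (Q : Set E) {z : ℝ} (hz : 0 < z) :
    ∫ x in z • Q, g x = z ^ finrank ℝ E * ∫ x in Q, g (z • x) := by
  rw [Measure.setIntegral_comp_smul_of_pos _ _ _ hz, smul_eq_mul,
    mul_inv_cancel_left₀ (pow_pos hz _).ne']

theorem setIntegral_perspCone (hQ : MeasurableSet Q) {g : E × ℝ → ℝ}
    (hg : IntegrableOn g (perspCone Q)) :
    ∫ q in perspCone Q, g q = ∫ z in Ioc (0 : ℝ) 1, ∫ x in z • Q, g (x, z) := by
  rw [Measure.volume_eq_prod] at hg ⊢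
  exact setIntegral_prod_eq_setIntegral_setIntegral (t := fun z => z • Q) measurableSet_Ioc
    (measurableSet_perspCone hQ) hg

theorem setIntegral_persp (hQ : IsCompact Q) {f : E → ℝ} (hf : ContinuousOn f Q) :
    ∫ q in perspCone Q, persp f q = 1 / ((finrank ℝ E : ℝ) + 2) * ∫ x in Q, f x := by
  rw [setIntegral_perspCone hQ.isClosed.measurableSet (integrableOn_persp hQ hf)]
  calc ∫ z in Ioc (0 : ℝ) 1, ∫ x in z • Q, persp f (x, z)
      = ∫ z in Ioc (0 : ℝ) 1, z ^ (finrank ℝ E + 1) * ∫ x in Q, f x := by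
        refine setIntegral_congr_fun measurableSet_Ioc fun z hz => ?_
        simp only [persp, setIntegral_smul_set _ _ hz.1, inv_smul_smul₀ hz.1.ne',
          integral_const_mul]
        ring
    _ = 1 / ((finrank ℝ E : ℝ) + 2) * ∫ x in Q, f x := by
        rw [← intervalIntegral.integral_of_le zero_le_one, intervalIntegral.integral_mul_const,
          integral_pow]
        push_cast
        ring

theorem setIntegral_comp_fst_perspCone (hQ : IsCompact Q) {f : E → ℝ}
    (hf : ContinuousOn f (Icc (0 : ℝ) 1 • Q)) :
    ∫ q in perspCone Q, f q.1 = ∫ z in (0 : ℝ)..1, z ^ finrank ℝ E * ∫ x in Q, f (z • x) := by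
  rw [setIntegral_perspCone hQ.isClosed.measurableSet (integrableOn_comp_fst_perspCone hQ hf),
    intervalIntegral.integral_of_le zero_le_one]
  exact setIntegral_congr_fun measurableSet_Ioc fun z hz => setIntegral_smul_set f Q hz.1

theorem toReal_volume_sub_toReal_volume_persp {K : Set E} {f g : E → ℝ} (hQ : IsCompact Q)
    (hfv : ConvexOn ℝ K f) (hfc : ContinuousOn f K) (hQK : Q ⊆ K) (h0K : (0 : E) ∈ K)
    (hf0 : f 0 = 0) (hgc : ContinuousOn g Q) (hfg : ∀ x ∈ Q, f x ≤ g x) :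
    (volume {p : E × ℝ × ℝ | 0 < p.2.2 ∧ p.2.2 ≤ 1 ∧ p.1 ∈ p.2.2 • Q ∧
        f p.1 ≤ p.2.1 ∧ p.2.1 ≤ p.2.2 * g (p.2.2⁻¹ • p.1)}).toReal
      - (volume {p : E × ℝ × ℝ | 0 < p.2.2 ∧ p.2.2 ≤ 1 ∧ p.1 ∈ p.2.2 • Q ∧
        p.2.2 * f (p.2.2⁻¹ • p.1) ≤ p.2.1 ∧ p.2.1 ≤ p.2.2 * g (p.2.2⁻¹ • p.1)}).toReal
      = 1 / ((finrank ℝ E : ℝ) + 2) * (∫ x in Q, f x)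
        - ∫ z in (0 : ℝ)..1, z ^ finrank ℝ E * ∫ x in Q, f (z • x) := by
  have hcone : ContinuousOn f (Icc (0 : ℝ) 1 • Q) := hfc.mono <| by
    rintro _ ⟨t, ht, w, hw, rfl⟩
    exact hfv.1.smul_mem_of_zero_mem h0K (hQK hw) ht
  rw [← setIntegral_persp hQ (hfc.mono hQK), ← setIntegral_comp_fst_perspCone hQ hcone,
    ← toReal_volume_region_between_cc_sub (integrableOn_comp_fst_perspCone hQ hcone)
      (integrableOn_persp hQ (hfc.mono hQK)) (integrableOn_persp hQ hgc)
      (measurableSet_perspCone hQ.isClosed.measurableSet) (hfv.le_persp hQK h0K hf0)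
      (persp_le_persp hfg)]
  congr 2
  exacts [volume_setOf_perspCone (fun q => f q.1) (persp g),
    volume_setOf_perspCone (persp f) (persp g)]

end Measure

theorem stmt_2_general (d : ℕ) (V : Finset (Fin d → ℝ)) (Q : Set (Fin d → ℝ))
    (hQ : Q = convexHull ℝ (V : Set (Fin d → ℝ)))
    (f μ : (Fin d → ℝ) → ℝ) (hf0 : f 0 = 0)
    (hfc : ContinuousOn f (convexHull ℝ (Q ∪ {0})))
    (hfv : ConvexOn ℝ (convexHull ℝ (Q ∪ {0})) f)
    (hμc : ContinuousOn μ Q)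
    (hμf : ∀ x ∈ Q, f x ≤ μ x) :
    (volume {p : (Fin d → ℝ) × ℝ × ℝ |
        0 < p.2.2 ∧ p.2.2 ≤ 1 ∧ p.1 ∈ p.2.2 • Q ∧
        f p.1 ≤ p.2.1 ∧ p.2.1 ≤ p.2.2 * μ (p.2.2⁻¹ • p.1)}).toReal
      - (volume {p : (Fin d → ℝ) × ℝ × ℝ |
        0 < p.2.2 ∧ p.2.2 ≤ 1 ∧ p.1 ∈ p.2.2 • Q ∧
        p.2.2 * f (p.2.2⁻¹ • p.1) ≤ p.2.1 ∧ p.2.1 ≤ p.2.2 * μ (p.2.2⁻¹ • p.1)}).toReal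
      = (1 / ((d : ℝ) + 2)) * (∫ x in Q, f x)
        - ∫ z in (0:ℝ)..1, z ^ d * ∫ x in Q, f (z • x) := by
  have hQc : IsCompact Q := hQ ▸ V.finite_toSet.isCompact_convexHull ℝ
  have h := toReal_volume_sub_toReal_volume_persp hQc hfv hfc
    (subset_union_left.trans (subset_convexHull ℝ _))
    (subset_convexHull ℝ _ (mem_union_right _ rfl)) hf0 hμc hμf
  rwa [Module.finrank_fin_fun] at h

/-- The cut-off amount `Δ(P⁰,P) = vol(P⁰) − vol(P)` between the naïve and
perspective relaxations; it does not depend on the concave upper bound `μ`. -/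
theorem stmt_2 (d : ℕ) (V : Finset (Fin d → ℝ)) (Q : Set (Fin d → ℝ))
    (hQ : Q = convexHull ℝ (V : Set (Fin d → ℝ)))
    (hQnonneg : ∀ x ∈ Q, ∀ i, 0 ≤ x i)
    (hQ0 : (0 : Fin d → ℝ) ∉ Q)
    (f μ : (Fin d → ℝ) → ℝ) (hf0 : f 0 = 0)
    (hfc : ContinuousOn f (convexHull ℝ (Q ∪ {0})))
    (hfv : ConvexOn ℝ (convexHull ℝ (Q ∪ {0})) f)
    (hμc : ContinuousOn μ Q) (hμv : ConcaveOn ℝ Q μ)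
    (hμf : ∀ x ∈ Q, f x ≤ μ x) :
    (volume {p : (Fin d → ℝ) × ℝ × ℝ |
        0 < p.2.2 ∧ p.2.2 ≤ 1 ∧ p.1 ∈ p.2.2 • Q ∧
        f p.1 ≤ p.2.1 ∧ p.2.1 ≤ p.2.2 * μ (p.2.2⁻¹ • p.1)}).toReal
      - (volume {p : (Fin d → ℝ) × ℝ × ℝ |
        0 < p.2.2 ∧ p.2.2 ≤ 1 ∧ p.1 ∈ p.2.2 • Q ∧
        p.2.2 * f (p.2.2⁻¹ • p.1) ≤ p.2.1 ∧ p.2.1 ≤ p.2.2 * μ (p.2.2⁻¹ • p.1)}).toReal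
      = (1 / ((d : ℝ) + 2)) * (∫ x in Q, f x)
        - ∫ z in (0:ℝ)..1, z ^ d * ∫ x in Q, f (z • x) :=
  stmt_2_general d V Q hQ f μ hf0 hfc hfv hμc hμf
end

section
/- Let d ≥ 1, let c ∈ ℝ^d with c_j ≠ 0 for all j, let v₀ ∈ ℝ^d, let u > 0, and set f(x) := e^{cᵀx} − 1 and Q_u := v₀ + u·[0,1]^d. Then (1/(d+2))·∫_{Q_u} f(x) dx − ∫_0^1 z^d · (∫_{Q_u} f(z·x) dx) dz = (1/∏_{j=1}^d c_j) · ( e^{cᵀv₀}·∏_{j=1}^d (e^{u·c_j} − 1)/(d+2) − ∫_0^1 e^{z·cᵀv₀} · ∏_{j=1}^d (e^{z·u·c_j} − 1) dz ) + u^d/((d+1)(d+2)). -/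
/-!
The box `Q_u` is the product of the intervals `[v₀ j, v₀ j + u]`, and `x ↦ e^{z cᵀx}` is a product
of one-variable exponentials, so `∫_{Q_u} e^{z cᵀx} dx` is a product of `d` elementary integrals,
each carrying a factor `1 / (z c_j)`; multiplying by `z^d` cancels the powers of `z`. The `−1` in
`f` contributes `vol Q_u = u^d`, and `∫₀¹ z^d dz = 1/(d+1)` then produces the last summand.
-/

open MeasureTheory Set

theorem image_const_add_smul_Icc {α β : Type*} [Field α] [LinearOrder α] [IsStrictOrderedRing α]
    [AddCommGroup β] [PartialOrder β] [IsOrderedAddMonoid β] [Module α β] [PosSMulMono α β]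
    [PosSMulReflectLE α β] {u : α} (hu : 0 < u) (v a b : β) :
    (fun y => v + u • y) '' Icc a b = Icc (v + u • a) (v + u • b) :=
  ((OrderIso.smulRight (β := β) hu).trans (OrderIso.addLeft v)).image_Icc a b

theorem setIntegral_Icc_pi_prod {ι 𝕜 : Type*} [Fintype ι] [RCLike 𝕜] (g : ι → ℝ → 𝕜)
    (a b : ι → ℝ) :
    ∫ x in Icc a b, ∏ i, g i (x i) = ∏ i, ∫ t in Icc (a i) (b i), g i t := by
  rw [← pi_univ_Icc, volume_pi, Measure.restrict_pi_pi, integral_fintype_prod_eq_prod]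

theorem mul_setIntegral_exp_Icc_add {k : ℝ} (hk : k ≠ 0) (a : ℝ) {u : ℝ} (hu : 0 ≤ u) (z : ℝ) :
    z * ∫ t in Icc a (a + u), Real.exp (z * k * t)
      = k⁻¹ * (Real.exp (z * k * a) * (Real.exp (z * u * k) - 1)) := by
  rcases eq_or_ne z 0 with rfl | hz
  · simp
  rw [integral_Icc_eq_integral_Ioc, ← intervalIntegral.integral_of_le (by linarith),
    intervalIntegral.integral_comp_mul_left (fun t => Real.exp t) (mul_ne_zero hz hk),
    integral_exp, mul_add, Real.exp_add, smul_eq_mul]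
  field_simp

theorem pow_mul_setIntegral_exp_dotProduct_box {ι : Type*} [Fintype ι] {c : ι → ℝ}
    (hc : ∀ j, c j ≠ 0) (v : ι → ℝ) {u : ℝ} (hu : 0 ≤ u) (z : ℝ) :
    z ^ Fintype.card ι * ∫ x in Icc v (v + u • 1), Real.exp (∑ i, c i * (z * x i))
      = (∏ j, c j)⁻¹ * (Real.exp (z * ∑ i, c i * v i) * ∏ j, (Real.exp (z * u * c j) - 1)) := by
  have hexp : ∀ x : ι → ℝ, Real.exp (∑ i, c i * (z * x i)) = ∏ i, Real.exp (z * c i * x i) := by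
    intro x
    rw [← Real.exp_sum]
    exact congrArg _ (Finset.sum_congr rfl fun i _ => by ring)
  simp_rw [hexp]
  rw [setIntegral_Icc_pi_prod (fun i t => Real.exp (z * c i * t))]
  simp_rw [Pi.add_apply, Pi.smul_apply, Pi.one_apply, smul_eq_mul,
    mul_one, ← Finset.card_univ, ← Finset.prod_const, ← Finset.prod_mul_distrib,
    mul_setIntegral_exp_Icc_add (hc _) _ hu, Finset.prod_mul_distrib, Finset.prod_inv_distrib,
    ← Real.exp_sum, Finset.mul_sum, mul_assoc]

theorem div_sub_integral_pow_mul_eq {F E : ℝ → ℝ} {A V : ℝ} (d : ℕ) (hE : Continuous E)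
    (h : ∀ z, z ^ d * F z = A * E z - z ^ d * V) :
    1 / ((d : ℝ) + 2) * F 1 - ∫ z in (0:ℝ)..1, z ^ d * F z
      = A * (E 1 / ((d : ℝ) + 2) - ∫ z in (0:ℝ)..1, E z) + V / (((d : ℝ) + 1) * ((d : ℝ) + 2)) := by
  have hF1 : F 1 = A * E 1 - V := by simpa using h 1
  simp_rw [h]
  rw [intervalIntegral.integral_sub (f := fun z => A * E z) (g := fun z => z ^ d * V)
      ((hE.const_smul A).intervalIntegrable 0 1)
      (((continuous_pow d).mul continuous_const).intervalIntegrable 0 1),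
    intervalIntegral.integral_const_mul, intervalIntegral.integral_mul_const, integral_pow, hF1]
  rw [one_pow, zero_pow d.succ_ne_zero]
  field_simp
  ring

theorem stmt_13_general (d : ℕ) (c v₀ : Fin d → ℝ)
    (hc : ∀ j, c j ≠ 0) (u : ℝ) (hu : 0 < u)
    (f : (Fin d → ℝ) → ℝ) (hf : f = fun x => Real.exp (∑ i, c i * x i) - 1)
    (Qu : Set (Fin d → ℝ))
    (hQu : Qu = (fun y : Fin d → ℝ => v₀ + u • y) '' Set.Icc (0 : Fin d → ℝ) 1) :
    (1 / ((d : ℝ) + 2)) * (∫ x in Qu, f x)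
        - ∫ z in (0:ℝ)..1, z ^ d * ∫ x in Qu, f (z • x)
      = (1 / ∏ j, c j) *
          (Real.exp (∑ i, c i * v₀ i) * (∏ j, (Real.exp (u * c j) - 1)) / ((d : ℝ) + 2)
            - ∫ z in (0:ℝ)..1,
                Real.exp (z * ∑ i, c i * v₀ i) * ∏ j, (Real.exp (z * u * c j) - 1))
        + u ^ d / (((d : ℝ) + 1) * ((d : ℝ) + 2)) := by
  have hbox : Qu = Icc v₀ (v₀ + u • 1) := by
    rw [hQu, image_const_add_smul_Icc hu, smul_zero, add_zero]
  have hvol : volume.real Qu = u ^ d := by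
    rw [hbox, measureReal_def,
      Real.volume_Icc_pi_toReal (le_add_of_nonneg_right (smul_nonneg hu.le zero_le_one))]
    simp
  have hscaled : ∀ z : ℝ, z ^ d * ∫ x in Qu, f (z • x)
      = 1 / (∏ j, c j) * (Real.exp (z * ∑ i, c i * v₀ i) * ∏ j, (Real.exp (z * u * c j) - 1))
        - z ^ d * u ^ d := by
    intro z
    have hint : IntegrableOn (fun x : Fin d → ℝ => Real.exp (∑ i, c i * (z * x i))) Qu := by
      rw [hbox]
      exact (Continuous.continuousOn (by fun_prop)).integrableOn_compact isCompact_Icc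
    simp only [hf, Pi.smul_apply, smul_eq_mul]
    rw [integral_sub hint (integrableOn_const (hbox ▸ isCompact_Icc.measure_lt_top.ne)),
      setIntegral_const, hvol, smul_eq_mul, mul_one, mul_sub, one_div, hbox,
      ← pow_mul_setIntegral_exp_dotProduct_box hc v₀ hu.le z, Fintype.card_fin]
  simpa using div_sub_integral_pow_mul_eq d (by fun_prop) hscaled

/-- Cut-off amount for the exponential function `f(x) = e^{cᵀx} − 1` on the box
`Q_u = v₀ + u·[0,1]^d`. -/
theorem stmt_13 (d : ℕ) (hd : 1 ≤ d) (c v₀ : Fin d → ℝ)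
    (hc : ∀ j, c j ≠ 0) (u : ℝ) (hu : 0 < u)
    (f : (Fin d → ℝ) → ℝ) (hf : f = fun x => Real.exp (∑ i, c i * x i) - 1)
    (Qu : Set (Fin d → ℝ))
    (hQu : Qu = (fun y : Fin d → ℝ => v₀ + u • y) '' Set.Icc (0 : Fin d → ℝ) 1) :
    (1 / ((d : ℝ) + 2)) * (∫ x in Qu, f x)
        - ∫ z in (0:ℝ)..1, z ^ d * ∫ x in Qu, f (z • x)
      = (1 / ∏ j, c j) *
          (Real.exp (∑ i, c i * v₀ i) * (∏ j, (Real.exp (u * c j) - 1)) / ((d : ℝ) + 2)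
            - ∫ z in (0:ℝ)..1,
                Real.exp (z * ∑ i, c i * v₀ i) * ∏ j, (Real.exp (z * u * c j) - 1))
        + u ^ d / (((d : ℝ) + 1) * ((d : ℝ) + 2)) :=
  stmt_13_general d c v₀ hc u hu f hf Qu hQu
end

section
/- Let d ≥ 1, let c ∈ ℝ^d with c > 0 componentwise, let v₀ ∈ ℝ^d with v₀ > 0 componentwise, and set f(x) := e^{cᵀx} − 1, Q_u := v₀ + u·[0,1]^d, F(u) := e^{cᵀv₀ + u·cᵀ𝟙} − 1, I(u) := ∫_0^1 z^d · (∫_{Q_u} f(z·x) dx) dz, and Δ(u) := (1/(d+2))·∫_{Q_u} f(x) dx − I(u). Then u^d · Δ(u) / ( (u^d·F(u))/(d+2) − I(u) ) tends to 1/∏_{j=1}^d c_j as u → ∞; equivalently, u^d · (d+1) · Δ(u) / ( (u^d·F(u))/(d+2) − I(u) ) tends to (d+1)/∏_{j=1}^d c_j as u → ∞. -/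
/-!
Write `M(u) = cᵀv₀ + u·cᵀ𝟙`. For `u > 0` everything is explicit, because the integral of
`e^{kᵀx}` over a box factorises: `∫_{Q_u} f = B(u)/∏ⱼcⱼ − u^d` with
`B(u) = ∏ⱼ (e^{cⱼ(v₀ⱼ+u)} − e^{cⱼv₀ⱼ}) ~ e^{M(u)}`, and `I(u) = J(u)/∏ⱼcⱼ − u^d/(d+1)`, where
`J(u)`, the integral over `z ∈ [0,1]` of `B(u)` with `c` replaced by `z c`, is at most
`e^{M(u)}/M(u)`. As `u^d` and `J(u)` are `o(e^{M(u)})`, the numerator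
`u^d Δ(u)` is `~ u^d e^{M(u)}/((d+2)∏ⱼcⱼ)` and the denominator is `~ u^d e^{M(u)}/(d+2)`.
-/

open MeasureTheory Filter Set Real Topology

theorem image_add_smul_Icc_zero_one {ι : Type*} (v : ι → ℝ) {u : ℝ} (hu : 0 < u) :
    (fun y => v + u • y) '' Icc 0 1 = Icc v (v + u • 1) := by
  have : (fun y : ι → ℝ => v + u • y) = (v + ·) ∘ OrderIso.smulRight hu := rfl
  rw [this, image_comp, OrderIso.image_Icc, image_const_add_Icc]
  change Icc (v + u • 0) (v + u • 1) = _
  rw [smul_zero, add_zero]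

theorem setIntegral_Icc_prod_eq_prod {ι : Type*} [Fintype ι] (g : ι → ℝ → ℝ) (lo hi : ι → ℝ) :
    ∫ x in Icc lo hi, ∏ i, g i (x i) = ∏ i, ∫ t in Icc (lo i) (hi i), g i t := by
  rw [← pi_univ_Icc, volume_pi, Measure.restrict_pi_pi, integral_fintype_prod_eq_prod]

theorem setIntegral_Icc_exp_mul {k a b : ℝ} (hk : k ≠ 0) (hab : a ≤ b) :
    ∫ t in Icc a b, exp (k * t) = (exp (k * b) - exp (k * a)) / k := by
  rw [integral_Icc_eq_integral_Ioc, ← intervalIntegral.integral_of_le hab,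
    intervalIntegral.integral_comp_mul_left (fun t => exp t) hk, integral_exp, smul_eq_mul]
  field_simp

theorem setIntegral_Icc_exp_sum_mul {ι : Type*} [Fintype ι] {k lo hi : ι → ℝ}
    (hk : ∀ i, k i ≠ 0) (hle : lo ≤ hi) :
    ∫ x in Icc lo hi, exp (∑ i, k i * x i) = ∏ i, (exp (k i * hi i) - exp (k i * lo i)) / k i := by
  simp_rw [exp_sum]
  rw [setIntegral_Icc_prod_eq_prod (fun i t => exp (k i * t))]
  exact Finset.prod_congr rfl fun i _ => setIntegral_Icc_exp_mul (hk i) (hle i)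

theorem setIntegral_Icc_exp_sum_mul_sub_one {ι : Type*} [Fintype ι] {k lo hi : ι → ℝ}
    (hk : ∀ i, k i ≠ 0) (hle : lo ≤ hi) :
    ∫ x in Icc lo hi, (exp (∑ i, k i * x i) - 1) =
      (∏ i, (exp (k i * hi i) - exp (k i * lo i))) / ∏ i, k i - ∏ i, (hi i - lo i) := by
  have hcont : Continuous fun x : ι → ℝ => exp (∑ i, k i * x i) := by fun_prop
  rw [integral_sub (hcont.continuousOn.integrableOn_compact isCompact_Icc)
      (integrableOn_const isCompact_Icc.measure_lt_top.ne),
    setIntegral_Icc_exp_sum_mul hk hle, Finset.prod_div_distrib, setIntegral_const, smul_eq_mul,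
    mul_one, measureReal_def, Real.volume_Icc_pi_toReal hle]

section ExpBox

variable {ι : Type*} [Fintype ι]

/-- For `k = z • c` this is `z^d ∏ⱼ cⱼ` times the integral of `e^{z cᵀx}` over `Q_u`. -/
noncomputable def boxExp (k v : ι → ℝ) (u : ℝ) : ℝ := ∏ i, (exp (k i * (v i + u)) - exp (k i * v i))

theorem continuous_boxExp_smul (k v : ι → ℝ) (u : ℝ) :
    Continuous fun z : ℝ => boxExp (z • k) v u := by
  unfold boxExp
  fun_prop

theorem setIntegral_box_exp_sum_mul_sub_one {k : ι → ℝ} (hk : ∀ i, k i ≠ 0) (v : ι → ℝ)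
    {u : ℝ} (hu : 0 ≤ u) :
    ∫ x in Icc v (v + u • 1), (exp (∑ i, k i * x i) - 1) =
      boxExp k v u / ∏ i, k i - u ^ Fintype.card ι := by
  have hle : v ≤ v + u • 1 := le_add_of_nonneg_right (smul_nonneg hu zero_le_one)
  simp [setIntegral_Icc_exp_sum_mul_sub_one hk hle, boxExp]

theorem integral_pow_mul_setIntegral_box {k : ι → ℝ} (hk : ∀ i, k i ≠ 0) (v : ι → ℝ)
    {u : ℝ} (hu : 0 ≤ u) :
    ∫ z in (0 : ℝ)..1, z ^ Fintype.card ι *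
        ∫ x in Icc v (v + u • 1), (exp (∑ i, k i * (z • x) i) - 1) =
      (∫ z in (0 : ℝ)..1, boxExp (z • k) v u) / ∏ i, k i -
        u ^ Fintype.card ι / (Fintype.card ι + 1) := by
  -- the box formula for `z • k` needs `z ≠ 0`, so it is applied on `(0, 1]`
  have hscaled : ∀ z ∈ uIoc (0 : ℝ) 1, z ^ Fintype.card ι *
        ∫ x in Icc v (v + u • 1), (exp (∑ i, k i * (z • x) i) - 1) =
      boxExp (z • k) v u / ∏ i, k i - u ^ Fintype.card ι * z ^ Fintype.card ι := by
    intro z hz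
    rw [uIoc_of_le zero_le_one] at hz
    have hz0 : z ≠ 0 := hz.1.ne'
    have hzk : ∀ i, (z • k) i ≠ 0 := fun i => mul_ne_zero hz0 (hk i)
    have hsum : ∀ x : ι → ℝ, ∑ i, k i * (z • x) i = ∑ i, (z • k) i * x i := fun x =>
      Finset.sum_congr rfl fun i _ => by simp only [Pi.smul_apply, smul_eq_mul]; ring
    simp_rw [hsum]
    rw [setIntegral_box_exp_sum_mul_sub_one hzk v hu]
    simp only [Pi.smul_apply, smul_eq_mul, Finset.prod_mul_distrib, Finset.prod_const,
      Finset.card_univ]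
    field_simp
  rw [intervalIntegral.integral_congr_ae (Eventually.of_forall hscaled),
    intervalIntegral.integral_sub
      (((continuous_boxExp_smul k v u).div_const _).intervalIntegrable _ _)
      (((continuous_pow _).const_mul _).intervalIntegrable _ _),
    intervalIntegral.integral_div, intervalIntegral.integral_const_mul, integral_pow]
  simp [div_eq_mul_inv]

theorem boxExp_eq_exp_mul_prod (k v : ι → ℝ) (u : ℝ) :
    boxExp k v u = exp (∑ i, k i * v i + u * ∑ i, k i) * ∏ i, (1 - exp (-(k i * u))) := by
  rw [Finset.mul_sum, ← Finset.sum_add_distrib, exp_sum, ← Finset.prod_mul_distrib, boxExp]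
  refine Finset.prod_congr rfl fun i _ => ?_
  rw [mul_sub, mul_one, ← exp_add]
  ring_nf

theorem boxExp_nonneg_and_le_exp {k : ι → ℝ} (hk : ∀ i, 0 ≤ k i) (v : ι → ℝ) {u : ℝ}
    (hu : 0 ≤ u) :
    0 ≤ boxExp k v u ∧ boxExp k v u ≤ exp (∑ i, k i * v i + u * ∑ i, k i) := by
  have hfac : ∀ i, 0 ≤ 1 - exp (-(k i * u)) ∧ 1 - exp (-(k i * u)) ≤ 1 := fun i =>
    ⟨sub_nonneg.2 (exp_le_one_iff.2 (neg_nonpos.2 (mul_nonneg (hk i) hu))),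
      sub_le_self _ (exp_pos _).le⟩
  rw [boxExp_eq_exp_mul_prod]
  exact ⟨mul_nonneg (exp_pos _).le (Finset.prod_nonneg fun i _ => (hfac i).1),
    mul_le_of_le_one_right (exp_pos _).le (Finset.prod_le_one (fun i _ => (hfac i).1)
      fun i _ => (hfac i).2)⟩

theorem tendsto_boxExp_div_exp {k : ι → ℝ} (hk : ∀ i, 0 < k i) (v : ι → ℝ) :
    Tendsto (fun u => boxExp k v u / exp (∑ i, k i * v i + u * ∑ i, k i)) atTop (𝓝 1) := by
  have hfac : ∀ i, Tendsto (fun u => 1 - exp (-(k i * u))) atTop (𝓝 1) := fun i => by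
    simpa using tendsto_const_nhds.sub
      (tendsto_exp_neg_atTop_nhds_zero.comp (tendsto_id.const_mul_atTop (hk i)))
  simpa [boxExp_eq_exp_mul_prod, mul_div_cancel_left₀, (exp_pos _).ne'] using
    tendsto_finsetProd Finset.univ fun i _ => hfac i

theorem integral_boxExp_smul_le {k : ι → ℝ} (hk : ∀ i, 0 ≤ k i) (v : ι → ℝ) {u : ℝ}
    (hu : 0 ≤ u) (hM : 0 < ∑ i, k i * v i + u * ∑ i, k i) :
    ∫ z in (0 : ℝ)..1, boxExp (z • k) v u ≤
      (exp (∑ i, k i * v i + u * ∑ i, k i) - 1) / (∑ i, k i * v i + u * ∑ i, k i) := by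
  set M := ∑ i, k i * v i + u * ∑ i, k i
  have hbound : ∀ z ∈ Icc (0 : ℝ) 1, boxExp (z • k) v u ≤ exp (M * z) := fun z hz => by
    have := (boxExp_nonneg_and_le_exp (k := z • k) (fun i => mul_nonneg hz.1 (hk i)) v hu).2
    convert this using 2
    simp only [M, Pi.smul_apply, smul_eq_mul, mul_assoc, ← Finset.mul_sum]
    ring
  calc ∫ z in (0 : ℝ)..1, boxExp (z • k) v u ≤ ∫ z in (0 : ℝ)..1, exp (M * z) :=
        intervalIntegral.integral_mono_on zero_le_one
          ((continuous_boxExp_smul k v u).intervalIntegrable _ _)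
          ((by fun_prop : Continuous fun z => exp (M * z)).intervalIntegrable _ _) hbound
    _ = (exp M - 1) / M := by
        rw [intervalIntegral.integral_comp_mul_left (fun t => exp t) hM.ne', integral_exp]
        simp [div_eq_inv_mul]

theorem tendsto_integral_boxExp_smul_div_exp [Nonempty ι] {k : ι → ℝ} (hk : ∀ i, 0 < k i)
    (v : ι → ℝ) :
    Tendsto (fun u => (∫ z in (0 : ℝ)..1, boxExp (z • k) v u) /
      exp (∑ i, k i * v i + u * ∑ i, k i)) atTop (𝓝 0) := by
  have hM : Tendsto (fun u => ∑ i, k i * v i + u * ∑ i, k i) atTop atTop :=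
    tendsto_atTop_add_const_left _ _
      (tendsto_id.atTop_mul_const (Finset.sum_pos (fun i _ => hk i) Finset.univ_nonempty))
  refine squeeze_zero' ?_ ?_ (tendsto_inv_atTop_zero.comp hM)
  · filter_upwards [eventually_ge_atTop 0] with u hu
    exact div_nonneg (intervalIntegral.integral_nonneg zero_le_one fun z hz =>
      (boxExp_nonneg_and_le_exp (fun i => mul_nonneg hz.1 (hk i).le) v hu).1) (exp_pos _).le
  · filter_upwards [eventually_ge_atTop 0, hM.eventually_gt_atTop 0] with u hu hMu
    rw [div_le_iff₀ (exp_pos _)]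
    calc _ ≤ _ := integral_boxExp_smul_le (fun i => (hk i).le) v hu hMu
      _ ≤ _ := by
        rw [Function.comp_apply, inv_mul_eq_div]
        exact div_le_div_of_nonneg_right (sub_le_self _ zero_le_one) hMu.le

end ExpBox

theorem tendsto_pow_div_exp_add_mul_atTop (n : ℕ) (a : ℝ) {b : ℝ} (hb : 0 < b) :
    Tendsto (fun u => u ^ n / exp (a + u * b)) atTop (𝓝 0) := by
  have := ((isLittleO_pow_exp_pos_mul_atTop n hb).tendsto_div_nhds_zero).const_mul (exp (-a))
  rw [mul_zero] at this
  refine this.congr fun u => ?_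
  rw [show a + u * b = a + b * u by ring, exp_add, exp_neg]
  field_simp

theorem tendsto_cutoff_ratio {n : ℕ} {P : ℝ} {A I B J E : ℝ → ℝ}
    (hA : ∀ᶠ u in atTop, A u = B u / P - u ^ n)
    (hI : ∀ᶠ u in atTop, I u = J u / P - u ^ n / (n + 1))
    (hE : Tendsto E atTop atTop)
    (hB : Tendsto (fun u => B u / E u) atTop (𝓝 1))
    (hJ : Tendsto (fun u => J u / E u) atTop (𝓝 0))
    (hpow : Tendsto (fun u => u ^ n / E u) atTop (𝓝 0)) :
    Tendsto (fun u => u ^ n * (1 / ((n : ℝ) + 2) * A u - I u) /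
      (u ^ n * (E u - 1) / ((n : ℝ) + 2) - I u)) atTop (𝓝 (1 / P)) := by
  have hEinv : Tendsto (fun u => (E u)⁻¹) atTop (𝓝 0) := tendsto_inv_atTop_zero.comp hE
  -- numerator and denominator are of the orders `E` and `uⁿ E`
  have hnum : Tendsto (fun u => (1 / ((n : ℝ) + 2) * A u - I u) / E u)
      atTop (𝓝 (1 / ((n : ℝ) + 2) / P)) := by
    have := (((hB.div_const P).sub hpow).const_mul (1 / ((n : ℝ) + 2))).sub
      ((hJ.div_const P).sub (hpow.div_const ((n : ℝ) + 1)))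
    convert this.congr' ?_ using 2
    · ring
    · filter_upwards [hA, hI] with u hAu hIu
      rw [hAu, hIu]
      ring
  have hden : Tendsto (fun u => (u ^ n * (E u - 1) / ((n : ℝ) + 2) - I u) / (u ^ n * E u))
      atTop (𝓝 (1 / ((n : ℝ) + 2))) := by
    have hJn : Tendsto (fun u => J u / E u * u⁻¹ ^ n) atTop (𝓝 0) := by
      simpa using hJ.mul (tendsto_inv_atTop_zero.pow n)
    have := (((tendsto_const_nhds (x := (1 : ℝ))).sub hEinv).div_const ((n : ℝ) + 2)).sub
      ((hJn.div_const P).sub (hEinv.div_const ((n : ℝ) + 1)))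
    convert this.congr' ?_ using 2
    · simp
    · filter_upwards [hI, eventually_gt_atTop 0, hE.eventually_gt_atTop 0] with u hIu hu hEu
      rw [hIu, inv_pow]
      field_simp
  convert (hnum.div hden (by positivity)).congr' ?_ using 2
  · field_simp
  · filter_upwards [eventually_gt_atTop 0, hE.eventually_gt_atTop 0] with u hu hEu
    simp only [Pi.div_apply]
    field_simp

theorem stmt_16_general (d : ℕ) (hd : 1 ≤ d) (c v₀ : Fin d → ℝ)
    (hc : ∀ i, 0 < c i)
    (f : (Fin d → ℝ) → ℝ) (hf : f = fun x => Real.exp (∑ i, c i * x i) - 1)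
    (Q : ℝ → Set (Fin d → ℝ))
    (hQ : ∀ u : ℝ, Q u = (fun y : Fin d → ℝ => v₀ + u • y) '' Set.Icc (0 : Fin d → ℝ) 1)
    (F : ℝ → ℝ)
    (hF : ∀ u : ℝ, F u = Real.exp (∑ i, c i * v₀ i + u * ∑ i, c i) - 1)
    (I : ℝ → ℝ)
    (hI : ∀ u : ℝ, I u = ∫ z in (0:ℝ)..1, z ^ d * ∫ x in Q u, f (z • x))
    (Δ : ℝ → ℝ)
    (hΔ : ∀ u : ℝ, Δ u = (1 / ((d : ℝ) + 2)) * (∫ x in Q u, f x) - I u) :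
    Tendsto (fun u : ℝ => u ^ d * Δ u / ((u ^ d * F u) / ((d : ℝ) + 2) - I u))
        atTop (nhds (1 / ∏ j, c j)) ∧
      Tendsto (fun u : ℝ =>
          u ^ d * (((d : ℝ) + 1) * Δ u) / ((u ^ d * F u) / ((d : ℝ) + 2) - I u))
        atTop (nhds (((d : ℝ) + 1) / ∏ j, c j)) := by
  subst hf
  have : Nonempty (Fin d) := ⟨⟨0, hd⟩⟩
  have hcne : ∀ i, c i ≠ 0 := fun i => (hc i).ne'
  have hT : 0 < ∑ i, c i := Finset.sum_pos (fun i _ => hc i) Finset.univ_nonempty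
  have hE : Tendsto (fun u => exp (∑ i, c i * v₀ i + u * ∑ i, c i)) atTop atTop :=
    tendsto_exp_atTop.comp (tendsto_atTop_add_const_left _ _ (tendsto_id.atTop_mul_const hT))
  have hQu : ∀ᶠ u in atTop, Q u = Icc v₀ (v₀ + u • 1) := by
    filter_upwards [eventually_gt_atTop 0] with u hu
    rw [hQ, image_add_smul_Icc_zero_one v₀ hu]
  have hlim : Tendsto (fun u : ℝ => u ^ d * Δ u / ((u ^ d * F u) / ((d : ℝ) + 2) - I u))
      atTop (𝓝 (1 / ∏ j, c j)) := by
    simp only [hΔ, hF]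
    refine tendsto_cutoff_ratio ?_ ?_ hE (tendsto_boxExp_div_exp hc v₀)
      (tendsto_integral_boxExp_smul_div_exp hc v₀) (tendsto_pow_div_exp_add_mul_atTop d _ hT)
    · filter_upwards [hQu, eventually_ge_atTop 0] with u hQ' hu
      simpa [hQ'] using setIntegral_box_exp_sum_mul_sub_one hcne v₀ hu
    · filter_upwards [hQu, eventually_ge_atTop 0] with u hQ' hu
      simpa [hI, hQ'] using integral_pow_mul_setIntegral_box hcne v₀ hu
  refine ⟨hlim, ?_⟩
  simpa only [mul_left_comm _ ((d : ℝ) + 1), mul_div_assoc, mul_one_div] using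
    hlim.const_mul ((d : ℝ) + 1)

/-- Asymptotics of the cut-off ratio for `f(x) = e^{cᵀx} − 1` on the box
`Q_u = v₀ + u·[0,1]^d`, against the constant upper bound `F`. -/
theorem stmt_16 (d : ℕ) (hd : 1 ≤ d) (c v₀ : Fin d → ℝ)
    (hc : ∀ i, 0 < c i) (hv : ∀ i, 0 < v₀ i)
    (f : (Fin d → ℝ) → ℝ) (hf : f = fun x => Real.exp (∑ i, c i * x i) - 1)
    (Q : ℝ → Set (Fin d → ℝ))
    (hQ : ∀ u : ℝ, Q u = (fun y : Fin d → ℝ => v₀ + u • y) '' Set.Icc (0 : Fin d → ℝ) 1)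
    (F : ℝ → ℝ)
    (hF : ∀ u : ℝ, F u = Real.exp (∑ i, c i * v₀ i + u * ∑ i, c i) - 1)
    (I : ℝ → ℝ)
    (hI : ∀ u : ℝ, I u = ∫ z in (0:ℝ)..1, z ^ d * ∫ x in Q u, f (z • x))
    (Δ : ℝ → ℝ)
    (hΔ : ∀ u : ℝ, Δ u = (1 / ((d : ℝ) + 2)) * (∫ x in Q u, f x) - I u) :
    Tendsto (fun u : ℝ => u ^ d * Δ u / ((u ^ d * F u) / ((d : ℝ) + 2) - I u))
        atTop (nhds (1 / ∏ j, c j)) ∧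
      Tendsto (fun u : ℝ =>
          u ^ d * (((d : ℝ) + 1) * Δ u) / ((u ^ d * F u) / ((d : ℝ) + 2) - I u))
        atTop (nhds (((d : ℝ) + 1) / ∏ j, c j)) :=
  stmt_16_general d hd c v₀ hc f hf Q hQ F hF I hI Δ hΔ
end
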